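/- The rectilinear region Ω = Ω_XY ∪ Ω_YZ ∪ Ω_ZX is a topological ball: Ω is homeomorphic to the closed unit ball of ℝ³. -/

import Mathlib

/-- The slab `Ω_XY = [-1,7] × [-7,1] × [-1,1]`. -/
def ΩXY : Set (ℝ × ℝ × ℝ) :=
  Set.Icc (-1 : ℝ) 7 ×ˢ (Set.Icc (-7 : ℝ) 1 ×ˢ Set.Icc (-1 : ℝ) 1)

/-- The slab `Ω_YZ = [-1,1] × [-1,7] × [-7,1]`. -/
def ΩYZ : Set (ℝ × ℝ × ℝ) :=
  Set.Icc (-1 : ℝ) 1 ×ˢ (Set.Icc (-1 : ℝ) 7 ×ˢ Set.Icc (-7 : ℝ) 1)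

/-- The slab `Ω_ZX = [-7,1] × [-1,1] × [-1,7]`. -/
def ΩZX : Set (ℝ × ℝ × ℝ) :=
  Set.Icc (-7 : ℝ) 1 ×ˢ (Set.Icc (-1 : ℝ) 1 ×ˢ Set.Icc (-1 : ℝ) 7)

/-- The rectilinear region `Ω = Ω_XY ∪ Ω_YZ ∪ Ω_ZX`. -/
def Ω : Set (ℝ × ℝ × ℝ) := ΩXY ∪ ΩYZ ∪ ΩZX

/-!
Each of the three slabs is a box containing the cube `[-1,1]³`, so `Ω` is star-shaped with respect
to every point of that cube. For a closed bounded set `s` which is star-shaped with respect to every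
point of a ball `closedBall 0 r`, the gauge is `r⁻¹`-Lipschitz and `s = {x | gauge s x ≤ 1}`; hence
the radial rescaling `x ↦ (gauge s x / ‖x‖) • x` is a homeomorphism of the ambient space carrying
`s` onto the closed unit ball. Apply this to the image of `Ω` in `EuclideanSpace ℝ (Fin 3)` under
a linear isomorphism.
-/

open Metric Set Filter Bornology
open scoped Topology Pointwise

section Module

variable {E : Type*} [AddCommGroup E] [Module ℝ E] [TopologicalSpace E] [ContinuousSMul ℝ E]
  {s : Set E} {x : E}

theorem StarConvex.mem_closure_of_gauge_le_one (hs : StarConvex ℝ 0 s) (ha : Absorbent ℝ s)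
    (h : gauge s x ≤ 1) : x ∈ closure s := by
  have hmem : ∀ᶠ c : ℝ in 𝓝[<] 1, c • x ∈ s := by
    filter_upwards [Ico_mem_nhdsLT one_pos] with c ⟨hc₀, hc₁⟩
    by_contra hcx
    refine (one_le_gauge_of_notMem hs ha.absorbs hcx).not_gt ?_
    rw [gauge_smul_of_nonneg hc₀, smul_eq_mul]
    exact mul_lt_one_of_nonneg_of_lt_one_left hc₀ hc₁ h
  have hlim : Tendsto (fun c : ℝ ↦ c • x) (𝓝[<] 1) (𝓝 x) :=
    ((continuous_id.smul continuous_const).tendsto' 1 x (one_smul _ _)).mono_left inf_le_left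
  exact mem_closure_of_tendsto hlim hmem

theorem StarConvex.gauge_le_one_iff_mem (hs : StarConvex ℝ 0 s) (hc : IsClosed s)
    (ha : Absorbent ℝ s) : gauge s x ≤ 1 ↔ x ∈ s :=
  ⟨fun h ↦ hc.closure_subset (hs.mem_closure_of_gauge_le_one ha h), gauge_le_one_of_mem⟩

variable [T1Space E]

theorem continuous_gaugeRescale_of_continuous_gauge {s t : Set E} (hs : Continuous (gauge s))
    (hs₀ : s ∈ 𝓝 0) (ht : Continuous (gauge t)) (ht₀ : t ∈ 𝓝 0) (htb : IsVonNBounded ℝ t) :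
    Continuous (gaugeRescale s t) := by
  have hta : Absorbent ℝ t := absorbent_nhds_zero ht₀
  refine continuous_iff_continuousAt.2 fun x ↦ ?_
  rcases eq_or_ne x 0 with rfl | hx
  · rw [ContinuousAt, gaugeRescale_zero]
    nth_rewrite 2 [← comap_gauge_nhds_zero htb ht₀]
    simp only [tendsto_comap_iff, Function.comp_def, gauge_gaugeRescale _ hta htb]
    exact tendsto_gauge_nhds_zero hs₀
  · exact (hs.continuousAt.div ht.continuousAt ((gauge_pos hta htb).2 hx).ne').smul
      continuousAt_id

theorem nonempty_homeomorph_of_continuous_gauge {s t : Set E}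
    (hs : Continuous (gauge s)) (hs₀ : s ∈ 𝓝 0) (hsb : IsVonNBounded ℝ s)
    (hs₁ : ∀ x, gauge s x ≤ 1 ↔ x ∈ s)
    (ht : Continuous (gauge t)) (ht₀ : t ∈ 𝓝 0) (htb : IsVonNBounded ℝ t)
    (ht₁ : ∀ x, gauge t x ≤ 1 ↔ x ∈ t) :
    Nonempty (s ≃ₜ t) := by
  let e : E ≃ₜ E :=
    { toEquiv := gaugeRescaleEquiv s t (absorbent_nhds_zero hs₀) hsb (absorbent_nhds_zero ht₀) htb
      continuous_toFun := continuous_gaugeRescale_of_continuous_gauge hs hs₀ ht ht₀ htb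
      continuous_invFun := continuous_gaugeRescale_of_continuous_gauge ht ht₀ hs hs₀ hsb }
  refine ⟨e.subtype fun x ↦ ?_⟩
  change x ∈ s ↔ gaugeRescale s t x ∈ t
  rw [← hs₁, ← ht₁, gauge_gaugeRescale _ (absorbent_nhds_zero ht₀) htb]

end Module

section Normed

variable {E F : Type*} [NormedAddCommGroup E] [NormedSpace ℝ E] [NormedAddCommGroup F]
  [NormedSpace ℝ F] {s : Set E} {r : ℝ}

theorem gauge_add_le_of_forall_starConvex (hr : 0 < r) (hne : s.Nonempty)
    (hs : ∀ b ∈ closedBall (0 : E) r, StarConvex ℝ b s) (x y : E) :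
    gauge s (x + y) ≤ gauge s x + ‖y‖ / r := by
  have ha : Absorbent ℝ s := absorbent_nhds_zero <|
    mem_of_superset (closedBall_mem_nhds 0 hr) fun b hb ↦ (hs b hb).mem hne
  refine le_of_forall_pos_le_add fun ε hε ↦ ?_
  obtain ⟨a, ha₀, hax, w, hw, hx⟩ :=
    exists_lt_of_gauge_lt ha (lt_add_of_pos_right (gauge s x) (half_pos hε))
  set u := ‖y‖ / r + ε / 2 with hu
  have hu₀ : 0 < u := by positivity
  have hau : 0 < a + u := by positivity
  -- `x + y` is `a + u` times a point of the segment from the star centre `u⁻¹ • y` to `w`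
  have hcentre : u⁻¹ • y ∈ closedBall (0 : E) r := by
    rw [mem_closedBall_zero_iff, norm_smul, norm_inv, Real.norm_of_nonneg hu₀.le,
      inv_mul_le_iff₀ hu₀, hu, add_mul, div_mul_cancel₀ _ hr.ne']
    linarith [mul_pos hr (half_pos hε)]
  have hmem : (u / (a + u)) • (u⁻¹ • y) + (a / (a + u)) • w ∈ s :=
    hs _ hcentre hw (by positivity) (by positivity) (by field_simp; ring)
  have hxy : x + y ∈ (a + u) • s := by
    refine ⟨_, hmem, ?_⟩
    rw [← hx]
    simp only [smul_add, smul_smul]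
    rw [show (a + u) * (u / (a + u) * u⁻¹) = 1 by field_simp,
      show (a + u) * (a / (a + u)) = a by field_simp, one_smul, add_comm]
  calc gauge s (x + y) ≤ a + u := gauge_le_of_mem hau.le hxy
    _ ≤ gauge s x + ‖y‖ / r + ε := by rw [hu]; linarith

theorem lipschitzWith_gauge_of_forall_starConvex (hr : 0 < r) (hne : s.Nonempty)
    (hs : ∀ b ∈ closedBall (0 : E) r, StarConvex ℝ b s) :
    LipschitzWith (Real.toNNReal r⁻¹) (gauge s) :=
  LipschitzWith.of_le_add_mul' _ fun x y ↦ by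
    simpa [dist_eq_norm, div_eq_inv_mul] using
      gauge_add_le_of_forall_starConvex hr hne hs y (x - y)

theorem nonempty_homeomorph_closedBall_of_eventually_starConvex (hsc : IsClosed s)
    (hsb : IsBounded s) (hne : s.Nonempty) (hs : ∀ᶠ b in 𝓝 (0 : E), StarConvex ℝ b s) :
    Nonempty (s ≃ₜ closedBall (0 : E) 1) := by
  obtain ⟨r, hr, hball⟩ := nhds_basis_closedBall.eventually_iff.1 hs
  have hs₀ : s ∈ 𝓝 0 := hs.mono fun b hb ↦ hb.mem hne
  have hB₀ : closedBall (0 : E) 1 ∈ 𝓝 0 := closedBall_mem_nhds 0 one_pos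
  refine nonempty_homeomorph_of_continuous_gauge
    (lipschitzWith_gauge_of_forall_starConvex hr hne hball).continuous hs₀
    (NormedSpace.isVonNBounded_of_isBounded ℝ hsb)
    (fun _ ↦ hs.self_of_nhds.gauge_le_one_iff_mem hsc (absorbent_nhds_zero hs₀))
    (continuous_gauge (convex_closedBall 0 1) hB₀) hB₀ (NormedSpace.isVonNBounded_closedBall ℝ E 1)
    fun x ↦ by rw [gauge_closedBall zero_le_one, div_one, mem_closedBall_zero_iff]

theorem ContinuousLinearEquiv.eventually_starConvex_image (φ : E ≃L[ℝ] F)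
    (hs : ∀ᶠ b in 𝓝 (0 : E), StarConvex ℝ b s) : ∀ᶠ b in 𝓝 (0 : F), StarConvex ℝ b (φ '' s) :=
  ((φ.symm.continuous.tendsto' 0 0 (map_zero _)).eventually hs).mono fun b hb ↦ by
    simpa using hb.linear_image (φ : E →ₗ[ℝ] F)

end Normed

theorem closedBall_zero_one_eq_cube :
    closedBall (0 : ℝ × ℝ × ℝ) 1 = Icc (-1 : ℝ) 1 ×ˢ (Icc (-1 : ℝ) 1 ×ˢ Icc (-1 : ℝ) 1) := by
  rw [show (0 : ℝ × ℝ × ℝ) = (0, 0, 0) from rfl, ← closedBall_prod_same, ← closedBall_prod_same]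
  norm_num [Real.closedBall_eq_Icc]

theorem isCompact_Ω : IsCompact Ω := by
  unfold Ω ΩXY ΩYZ ΩZX
  exact (((isCompact_Icc.prod (isCompact_Icc.prod isCompact_Icc)).union
    (isCompact_Icc.prod (isCompact_Icc.prod isCompact_Icc))).union
    (isCompact_Icc.prod (isCompact_Icc.prod isCompact_Icc)))

theorem starConvex_Ω {b : ℝ × ℝ × ℝ} (hb : b ∈ closedBall 0 1) : StarConvex ℝ b Ω := by
  rw [closedBall_zero_one_eq_cube] at hb
  obtain ⟨⟨hx₁, hx₂⟩, ⟨hy₁, hy₂⟩, ⟨hz₁, hz₂⟩⟩ := hb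
  have hbox {a₁ b₁ a₂ b₂ a₃ b₃ : ℝ} (h : b ∈ Icc a₁ b₁ ×ˢ (Icc a₂ b₂ ×ˢ Icc a₃ b₃)) :
      StarConvex ℝ b (Icc a₁ b₁ ×ˢ (Icc a₂ b₂ ×ˢ Icc a₃ b₃)) :=
    ((convex_Icc _ _).prod ((convex_Icc _ _).prod (convex_Icc _ _))).starConvex h
  refine ((hbox ?_).union (hbox ?_)).union (hbox ?_) <;>
    simp only [mem_prod, mem_Icc] <;> refine ⟨⟨?_, ?_⟩, ⟨?_, ?_⟩, ⟨?_, ?_⟩⟩ <;> linarith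

/-- `Ω` is a topological ball: it is homeomorphic to the closed
unit ball of `ℝ³`. -/
theorem Omega_homeomorph_ball :
    Nonempty (Ω ≃ₜ (Metric.closedBall (0 : EuclideanSpace ℝ (Fin 3)) 1)) := by
  let φ : (ℝ × ℝ × ℝ) ≃L[ℝ] EuclideanSpace ℝ (Fin 3) := .ofFinrankEq (by simp)
  have hstar : ∀ᶠ b in 𝓝 (0 : ℝ × ℝ × ℝ), StarConvex ℝ b Ω :=
    mem_of_superset (closedBall_mem_nhds 0 one_pos) fun _ ↦ starConvex_Ω
  have hne : Ω.Nonempty := ⟨0, Or.inl (Or.inl (by norm_num [ΩXY, Prod.le_def]))⟩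
  have hK : IsCompact (φ '' Ω) := isCompact_Ω.image φ.continuous
  obtain ⟨e⟩ := nonempty_homeomorph_closedBall_of_eventually_starConvex hK.isClosed hK.isBounded
    (hne.image φ) (φ.eventually_starConvex_image hstar)
  exact ⟨(φ.toHomeomorph.image Ω).trans e⟩
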